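/- Let M be a real symmetric positive definite 3×3 matrix and, for a real symmetric 3×3 matrix N, let G_M(N) denote the unique real symmetric 3×3 matrix G satisfying G·M^{-1/2} + M^{-1/2}·G = -M⁻¹·N·M⁻¹. Then the linear map G_M is self-adjoint and negative definite with respect to the trace inner product: for all real symmetric 3×3 matrices N, N' one has tr(G_M(N)·N') = tr(N·G_M(N')), and tr(G_M(N)·N) < 0 whenever N ≠ 0. -/

import Mathlib

open Matrix

open scoped ComplexOrder in
/-- The square root of a positive semidefinite matrix, as defined in the older Mathlib
(`Matrix.PosSemidef.sqrt`, since removed in favour of `CFC.sqrt`). -/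
noncomputable def Matrix.PosSemidef.sqrt {n 𝕜 : Type*} [Fintype n] [DecidableEq n] [RCLike 𝕜]
    {A : Matrix n n 𝕜} (hA : A.PosSemidef) : Matrix n n 𝕜 :=
  hA.1.eigenvectorUnitary.1 * diagonal ((↑) ∘ (√·) ∘ hA.1.eigenvalues) *
    (star hA.1.eigenvectorUnitary : Matrix n n 𝕜)

/-! With `S = √M`, conjugating the defining equation by `M` inverts it:
`N = -(M G S + S G M)` for `G = G_M(N)`. Self-adjointness is then cyclicity of the trace, and
`tr (G N) = -2 tr ((S G) S (S G)ᴴ) < 0` because `S` is positive definite and `S G ≠ 0`. -/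

namespace Matrix

open scoped ComplexOrder

variable {n R 𝕜 : Type*} [Fintype n] [CommRing R] [RCLike 𝕜]

lemma trace_mul_sandwich_comm (M S G G' : Matrix n n R) :
    (G * (M * G' * S + S * G' * M)).trace = ((M * G * S + S * G * M) * G').trace := by
  simp only [mul_add, add_mul, trace_add, ← mul_assoc]
  rw [trace_mul_comm (G * M * G') S, trace_mul_comm (G * S * G') M, add_comm]
  simp only [← mul_assoc]

variable [DecidableEq n] {A : Matrix n n 𝕜}

lemma PosSemidef.sqrt_mul_self (hA : A.PosSemidef) : hA.sqrt * hA.sqrt = A := by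
  set U : Matrix n n 𝕜 := hA.1.eigenvectorUnitary.1
  set D : Matrix n n 𝕜 := diagonal ((↑) ∘ (√·) ∘ hA.1.eigenvalues)
  have hD : D * D = diagonal (RCLike.ofReal ∘ hA.1.eigenvalues) := by
    simp [D, diagonal_mul_diagonal, ← RCLike.ofReal_mul,
      Real.mul_self_sqrt (hA.eigenvalues_nonneg _)]
  calc hA.sqrt * hA.sqrt = U * (D * (star U * U) * D) * star U := by
        simp only [PosSemidef.sqrt, U, D, mul_assoc]
    _ = A := by
        rw [Unitary.coe_star_mul_self, mul_one, hD]
        conv_rhs => rw [hA.1.spectral_theorem, Unitary.conjStarAlgAut_apply]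

lemma PosSemidef.posSemidef_sqrt (hA : A.PosSemidef) : hA.sqrt.PosSemidef := by
  have hD : (diagonal ((↑) ∘ (√·) ∘ hA.1.eigenvalues : n → 𝕜)).PosSemidef :=
    .diagonal fun i ↦ by simp [Real.sqrt_nonneg]
  have := hD.mul_mul_conjTranspose_same hA.1.eigenvectorUnitary.1
  rwa [← star_eq_conjTranspose, ← Unitary.coe_star] at this

lemma PosDef.posDef_sqrt (hA : A.PosDef) : hA.posSemidef.sqrt.PosDef := by
  have hS := hA.posSemidef.posSemidef_sqrt
  refine hS.posDef_iff_isUnit.mpr (isUnit_of_mul_isUnit_left (y := hA.posSemidef.sqrt) ?_)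
  rw [hA.posSemidef.sqrt_mul_self]
  exact (hA.posSemidef.posDef_iff_isUnit).mp hA

lemma PosDef.trace_mul_mul_conjTranspose_pos {B X : Matrix n n 𝕜} (hB : B.PosDef)
    (hX : X ≠ 0) : 0 < (X * B * Xᴴ).trace := by
  set T := hB.posSemidef.sqrt
  have hT : IsUnit T := hB.posDef_sqrt.posSemidef.posDef_iff_isUnit.mp hB.posDef_sqrt
  have hXB : X * B * Xᴴ = (X * T) * (X * T)ᴴ := by
    rw [conjTranspose_mul, hB.posDef_sqrt.isHermitian.eq, ← mul_assoc, mul_assoc X T T,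
      hB.posSemidef.sqrt_mul_self]
  have hXT : X * T ≠ 0 := fun h ↦ hX (by simpa using hT.mul_left_eq_zero.mp h)
  rw [hXB]
  exact (posSemidef_self_mul_conjTranspose _).trace_nonneg.lt_of_ne
    (Ne.symm <| (trace_mul_conjTranspose_self_eq_zero_iff).not.mpr hXT)

lemma eq_neg_of_mul_inv_add_inv_mul_eq_neg {S M G N : Matrix n n R} (hS : IsUnit S)
    (hSS : S * S = M) (h : G * S⁻¹ + S⁻¹ * G = -(M⁻¹ * N * M⁻¹)) :
    N = -(M * G * S + S * G * M) := by
  have hS' : IsUnit S.det := (isUnit_iff_isUnit_det S).mp hS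
  have hM : IsUnit M.det := (isUnit_iff_isUnit_det M).mp (hSS ▸ hS.mul hS)
  have hMS : M * S⁻¹ = S := by rw [← hSS, mul_nonsing_inv_cancel_right _ _ hS']
  have hSM : S⁻¹ * M = S := by rw [← hSS, ← mul_assoc, nonsing_inv_mul _ hS', one_mul]
  calc N = M * (M⁻¹ * N * M⁻¹) * M := by
        simp only [mul_assoc, mul_nonsing_inv_cancel_left _ _ hM, nonsing_inv_mul _ hM, mul_one]
    _ = -(M * (G * S⁻¹ + S⁻¹ * G) * M) := by rw [h]; noncomm_ring
    _ = -(M * G * (S⁻¹ * M) + M * S⁻¹ * G * M) := by noncomm_ring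
    _ = -(M * G * S + S * G * M) := by rw [hSM, hMS]

lemma PosDef.trace_mul_sandwich_self_pos {S M G : Matrix n n 𝕜} (hS : S.PosDef) (hSS : S * S = M)
    (hG : G.IsHermitian) (hG0 : G ≠ 0) : 0 < (G * (M * G * S + S * G * M)).trace := by
  subst hSS
  have hSG : (S * G)ᴴ = G * S := by rw [conjTranspose_mul, hG.eq, hS.isHermitian.eq]
  have htrace : (G * (S * S * G * S + S * G * (S * S))).trace =
      2 * (S * G * S * (S * G)ᴴ).trace := by
    have h₁ : (G * (S * S * G * S)).trace = (S * G * S * (G * S)).trace := by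
      rw [show G * (S * S * G * S) = G * S * (S * G * S) by noncomm_ring, trace_mul_comm]
    have h₂ : (G * (S * G * (S * S))).trace = (S * G * S * (G * S)).trace := by
      rw [show G * (S * G * (S * S)) = G * S * G * S * S by noncomm_ring, trace_mul_comm]
      simp only [mul_assoc]
    rw [hSG, mul_add, trace_add, two_mul, h₁, h₂]
  rw [htrace]
  exact mul_pos two_pos
    (hS.trace_mul_mul_conjTranspose_pos fun h ↦ hG0 (hS.isUnit.mul_right_eq_zero.mp h))

end Matrix

/-- Let `M` be real symmetric positive definite (3×3) and for
symmetric `N` let `G N` be the unique symmetric matrix with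
`G N · M^{-1/2} + M^{-1/2} · G N = -M⁻¹·N·M⁻¹` (this defining property is taken
as the hypothesis `hG`).  Then `G` is self-adjoint and negative definite for the
trace inner product: `tr(G(N)·N') = tr(N·G(N'))` for all symmetric `N, N'`, and
`tr(G(N)·N) < 0` whenever `N ≠ 0`. -/
theorem stmt_2 (M : Matrix (Fin 3) (Fin 3) ℝ) (hM : M.PosDef)
    (G : Matrix (Fin 3) (Fin 3) ℝ → Matrix (Fin 3) (Fin 3) ℝ)
    (hG : ∀ N : Matrix (Fin 3) (Fin 3) ℝ, N.IsHermitian →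
      (G N).IsHermitian ∧
      G N * (hM.posSemidef.sqrt)⁻¹ + (hM.posSemidef.sqrt)⁻¹ * G N = -(M⁻¹ * N * M⁻¹)) :
    (∀ N N' : Matrix (Fin 3) (Fin 3) ℝ, N.IsHermitian → N'.IsHermitian →
        (G N * N').trace = (N * G N').trace) ∧
    (∀ N : Matrix (Fin 3) (Fin 3) ℝ, N.IsHermitian → N ≠ 0 →
        (G N * N).trace < 0) := by
  set S := hM.posSemidef.sqrt
  have hSS : S * S = M := hM.posSemidef.sqrt_mul_self
  have hS : S.PosDef := hM.posDef_sqrt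
  have hsolve : ∀ N, N.IsHermitian → N = -(M * G N * S + S * G N * M) := fun N hN ↦
    eq_neg_of_mul_inv_add_inv_mul_eq_neg hS.isUnit hSS (hG N hN).2
  refine ⟨fun N N' hN hN' ↦ ?_, fun N hN hN0 ↦ ?_⟩
  · conv_lhs => rw [hsolve N' hN']
    conv_rhs => rw [hsolve N hN]
    rw [mul_neg, neg_mul, trace_neg, trace_neg, trace_mul_sandwich_comm]
  · have hGN : G N ≠ 0 := fun h ↦ hN0 (by rw [hsolve N hN, h]; simp)
    calc (G N * N).trace = -(G N * (M * G N * S + S * G N * M)).trace := by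
          nth_rw 2 [hsolve N hN]; rw [mul_neg, trace_neg]
      _ < 0 := neg_lt_zero.mpr (hS.trace_mul_sandwich_self_pos hSS (hG N hN).1 hGN)
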